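/- Let L be a positive integer. The complex roots of the polynomial s̃(y) = ∑_{n=0}^{L} C(2L+1, 2n) y^n are exactly the L distinct negative real numbers y_{k,L} = −tan²( π(2k+1) / (2(2L+1)) ) for k = 0, 1, …, L−1; that is, for x ∈ ℂ, s̃(x) = 0 if and only if x = y_{k,L} for some k ∈ {0, …, L−1}. -/

import Mathlib

/-!
With `w = i tan θ` one has `(1 + w)^(2L+1) + (1 - w)^(2L+1) = 2 s̃(w²)`, and
`1 ± i tan θ = e^{±iθ} / cos θ`, so `s̃(-tan² θ) = cos((2L+1)θ) / cos^(2L+1) θ`. This vanishes at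
`θ_k = π(2k+1) / (2(2L+1))`. For `k < L` these angles increase inside `(0, π/2)`, where `tan²` is
strictly increasing, so they give `L` distinct negative roots; as `deg s̃ ≤ L`, there are no others.
-/

open Finset Polynomial

theorem Finset.sum_range_two_mul {M : Type*} [AddCommMonoid M] (f : ℕ → M) (n : ℕ) :
    ∑ k ∈ range (2 * n), f k = ∑ i ∈ range n, (f (2 * i) + f (2 * i + 1)) := by
  induction n with
  | zero => simp
  | succ n ih => rw [mul_add, mul_one, sum_range_succ, sum_range_succ, ih, sum_range_succ, add_assoc]

theorem Polynomial.mem_of_isRoot_of_natDegree_le_card {R : Type*} [CommRing R] [IsDomain R]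
    [DecidableEq R] {p : R[X]} (hp : p ≠ 0) {s : Finset R} (hs : ∀ y ∈ s, p.IsRoot y)
    (hcard : p.natDegree ≤ #s) {x : R} (hx : p.IsRoot x) : x ∈ s := by
  by_contra hxs
  refine hp (eq_zero_of_natDegree_lt_card_of_eval_eq_zero' p (insert x s) ?_ ?_)
  · simpa [forall_mem_insert] using ⟨hx, hs⟩
  · rw [card_insert_of_notMem hxs]; omega

noncomputable def sTilde (R : Type*) [Semiring R] (L : ℕ) : R[X] :=
  ∑ n ∈ range (L + 1), C ((2 * L + 1).choose (2 * n) : R) * X ^ n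

section sTilde

variable {R : Type*} (L : ℕ)

theorem eval_sTilde [Semiring R] (x : R) :
    (sTilde R L).eval x = ∑ n ∈ range (L + 1), ((2 * L + 1).choose (2 * n) : R) * x ^ n := by
  simp [sTilde, eval_finsetSum]

theorem natDegree_sTilde_le [Semiring R] : (sTilde R L).natDegree ≤ L :=
  natDegree_sum_le_of_forall_le _ _ fun _ hn =>
    (natDegree_C_mul_X_pow_le _ _).trans (Nat.lt_succ_iff.mp (mem_range.mp hn))

theorem eval_sTilde_zero [Semiring R] : (sTilde R L).eval 0 = 1 := by
  simp [eval_sTilde, sum_range_succ']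

theorem sTilde_ne_zero [Semiring R] [Nontrivial R] : sTilde R L ≠ 0 := fun h => by
  simpa [h] using eval_sTilde_zero (R := R) L

theorem two_mul_eval_sTilde_sq [CommRing R] (w : R) :
    2 * (sTilde R L).eval (w ^ 2) = (1 + w) ^ (2 * L + 1) + (1 - w) ^ (2 * L + 1) := by
  rw [add_comm 1 w, sub_eq_neg_add, add_pow, add_pow, ← sum_add_distrib,
    show 2 * L + 1 + 1 = 2 * (L + 1) by ring, sum_range_two_mul, eval_sTilde, mul_sum]
  refine sum_congr rfl fun n _ => ?_
  simp only [one_pow, mul_one, Even.neg_pow ⟨n, two_mul n⟩, Odd.neg_pow ⟨n, rfl⟩, pow_mul]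
  ring

end sTilde

namespace Complex

theorem one_add_I_mul_tan {z : ℂ} (hz : cos z ≠ 0) : 1 + I * tan z = exp (z * I) / cos z := by
  rw [tan, exp_mul_I]; field_simp

theorem one_add_I_mul_tan_pow_add_one_sub_pow {z : ℂ} (hz : cos z ≠ 0) (n : ℕ) :
    (1 + I * tan z) ^ n + (1 - I * tan z) ^ n = 2 * cos (n * z) / cos z ^ n := by
  have hminus : 1 - I * tan z = exp (-z * I) / cos z := by
    rw [← cos_neg] at hz ⊢
    rw [← one_add_I_mul_tan hz, tan_neg, mul_neg, sub_eq_add_neg]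
  rw [one_add_I_mul_tan hz, hminus, div_pow, div_pow, ← add_div, two_cos,
    ← exp_nat_mul, ← exp_nat_mul]
  ring_nf

theorem eval_sTilde_neg_tan_sq (L : ℕ) {z : ℂ} (hz : cos z ≠ 0) :
    (sTilde ℂ L).eval (-tan z ^ 2) = cos ((2 * L + 1) * z) / cos z ^ (2 * L + 1) := by
  have h := two_mul_eval_sTilde_sq L (I * tan z)
  rw [one_add_I_mul_tan_pow_add_one_sub_pow hz, mul_pow, I_sq, neg_one_mul] at h
  push_cast at h
  rw [mul_div_assoc] at h
  exact mul_left_cancel₀ two_ne_zero h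

end Complex

open Real

theorem Real.strictMonoOn_tan_sq : StrictMonoOn (fun x => tan x ^ 2) (Set.Ico 0 (π / 2)) :=
  fun x hx y hy hxy =>
    pow_lt_pow_left₀ (strictMonoOn_tan ⟨by linarith [hx.1, pi_pos], hx.2⟩
      ⟨by linarith [hy.1, pi_pos], hy.2⟩ hxy) (tan_nonneg_of_nonneg_of_le_pi_div_two hx.1 hx.2.le)
      two_ne_zero

noncomputable def sTildeAngle (L k : ℕ) : ℝ := π * (2 * (k : ℝ) + 1) / (2 * (2 * (L : ℝ) + 1))

section sTildeAngle

variable {L k : ℕ}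

theorem sTildeAngle_pos : 0 < sTildeAngle L k := by
  unfold sTildeAngle; have := pi_pos; positivity

theorem sTildeAngle_lt_pi_div_two (hk : k < L) : sTildeAngle L k < π / 2 := by
  have hkL : (k : ℝ) + 1 ≤ L := by exact_mod_cast hk
  rw [sTildeAngle, div_lt_iff₀ (by positivity)]
  nlinarith [pi_pos]

theorem strictMono_sTildeAngle (L : ℕ) : StrictMono (sTildeAngle L) := fun k m hkm => by
  have : (k : ℝ) < m := by exact_mod_cast hkm
  unfold sTildeAngle
  gcongr

theorem tan_sTildeAngle_pos (hk : k < L) : 0 < tan (sTildeAngle L k) :=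
  tan_pos_of_pos_of_lt_pi_div_two sTildeAngle_pos (sTildeAngle_lt_pi_div_two hk)

theorem strictMonoOn_tan_sq_sTildeAngle (L : ℕ) :
    StrictMonoOn (fun k => tan (sTildeAngle L k) ^ 2) (Set.Iio L) :=
  fun _ hk _ hm hkm => strictMonoOn_tan_sq ⟨sTildeAngle_pos.le, sTildeAngle_lt_pi_div_two hk⟩
    ⟨sTildeAngle_pos.le, sTildeAngle_lt_pi_div_two hm⟩ (strictMono_sTildeAngle L hkm)

theorem cos_mul_sTildeAngle (L k : ℕ) : cos ((2 * L + 1) * sTildeAngle L k) = 0 :=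
  cos_eq_zero_iff.mpr ⟨k, by unfold sTildeAngle; field_simp; push_cast; ring⟩

theorem isRoot_sTilde_neg_tan_sq_sTildeAngle (hk : k < L) :
    (sTilde ℂ L).IsRoot ((-tan (sTildeAngle L k) ^ 2 : ℝ) : ℂ) := by
  have hcos : Complex.cos (sTildeAngle L k) ≠ 0 := by
    exact_mod_cast (cos_pos_of_mem_Ioo ⟨by linarith [sTildeAngle_pos (L := L) (k := k), pi_pos],
      sTildeAngle_lt_pi_div_two hk⟩).ne'
  have hcos_mul : Complex.cos ((2 * L + 1) * sTildeAngle L k) = 0 := by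
    exact_mod_cast cos_mul_sTildeAngle L k
  rw [IsRoot, Complex.ofReal_neg, Complex.ofReal_pow, Complex.ofReal_tan,
    Complex.eval_sTilde_neg_tan_sq L hcos, hcos_mul, zero_div]

theorem isRoot_sTilde_iff (x : ℂ) :
    (sTilde ℂ L).IsRoot x ↔ ∃ k < L, x = ((-tan (sTildeAngle L k) ^ 2 : ℝ) : ℂ) := by
  classical
  refine ⟨fun hx => ?_, fun ⟨k, hk, hkx⟩ => hkx ▸ isRoot_sTilde_neg_tan_sq_sTildeAngle hk⟩
  have hinj : Set.InjOn (fun k => ((-tan (sTildeAngle L k) ^ 2 : ℝ) : ℂ)) (range L) :=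
    fun k hk m hm h => (strictMonoOn_tan_sq_sTildeAngle L).injOn (mem_range.mp hk)
      (mem_range.mp hm) (neg_inj.mp (Complex.ofReal_injective h))
  have hcard : #((range L).image fun k => ((-tan (sTildeAngle L k) ^ 2 : ℝ) : ℂ)) = L := by
    rw [card_image_of_injOn hinj, card_range]
  obtain ⟨k, hk, hkx⟩ := mem_image.mp (mem_of_isRoot_of_natDegree_le_card (sTilde_ne_zero L)
    (forall_mem_image.mpr fun k hk => isRoot_sTilde_neg_tan_sq_sTildeAngle (mem_range.mp hk))
    ((natDegree_sTilde_le L).trans hcard.ge) hx)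
  exact ⟨k, mem_range.mp hk, hkx.symm⟩

end sTildeAngle

theorem roots_of_sTilde_general (L : ℕ) :
    (∀ k < L, ∀ m < L, k ≠ m →
      -(Real.tan (Real.pi * (2 * (k : ℝ) + 1) / (2 * (2 * (L : ℝ) + 1))) ^ 2) ≠
      -(Real.tan (Real.pi * (2 * (m : ℝ) + 1) / (2 * (2 * (L : ℝ) + 1))) ^ 2)) ∧
    (∀ k < L,
      -(Real.tan (Real.pi * (2 * (k : ℝ) + 1) / (2 * (2 * (L : ℝ) + 1))) ^ 2) < 0) ∧
    ∀ x : ℂ,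
      (∑ n ∈ Finset.range (L + 1), (Nat.choose (2 * L + 1) (2 * n) : ℂ) * x ^ n) = 0 ↔
      ∃ k < L, x =
        ((-(Real.tan (Real.pi * (2 * (k : ℝ) + 1) / (2 * (2 * (L : ℝ) + 1))) ^ 2) : ℝ) : ℂ) := by
  refine ⟨fun k hk m hm hkm h => hkm ?_, fun k hk => ?_, fun x => ?_⟩
  · exact (strictMonoOn_tan_sq_sTildeAngle L).injOn hk hm (neg_inj.mp h)
  · exact neg_neg_of_pos (pow_pos (tan_sTildeAngle_pos hk) 2)
  · rw [← eval_sTilde, ← IsRoot.def]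
    exact isRoot_sTilde_iff x

/-- the complex roots of `s̃(y) = ∑_{n=0}^{L} C(2L+1, 2n) yⁿ` are
exactly the `L` distinct negative real numbers
`y_{k,L} = -tan²(π(2k+1)/(2(2L+1)))`, `k = 0, …, L-1`. -/
theorem roots_of_sTilde (L : ℕ) (hL : 0 < L) :
    (∀ k < L, ∀ m < L, k ≠ m →
      -(Real.tan (Real.pi * (2 * (k : ℝ) + 1) / (2 * (2 * (L : ℝ) + 1))) ^ 2) ≠
      -(Real.tan (Real.pi * (2 * (m : ℝ) + 1) / (2 * (2 * (L : ℝ) + 1))) ^ 2)) ∧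
    (∀ k < L,
      -(Real.tan (Real.pi * (2 * (k : ℝ) + 1) / (2 * (2 * (L : ℝ) + 1))) ^ 2) < 0) ∧
    ∀ x : ℂ,
      (∑ n ∈ Finset.range (L + 1), (Nat.choose (2 * L + 1) (2 * n) : ℂ) * x ^ n) = 0 ↔
      ∃ k < L, x =
        ((-(Real.tan (Real.pi * (2 * (k : ℝ) + 1) / (2 * (2 * (L : ℝ) + 1))) ^ 2) : ℝ) : ℂ) :=
  roots_of_sTilde_general L
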